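/- arXiv:1205.3090 — 2 statements merged into one kernel-verified Lean document; each statement's English description precedes it below -/
import Mathlib

section
/- Let Γ be a finite chordal graph (every cycle of length at least 4 has a chord) that is not complete. Then the vertex set of Γ can be written as V(Γ) = V1 ∪ V2 where V1 and V2 are proper subsets, the induced subgraph on V1 ∩ V2 is a complete graph, and no vertex of V1 \ V2 is adjacent to any vertex of V2 \ V1. -/
/-!
Pick non-adjacent vertices `a`, `b` and an inclusion-minimal set `S` separating them. By
minimality every `s ∈ S` has a neighbour in the component `A` of `a` and in the component `B`
of `b` in `Γ - S`. If `x, y ∈ S` were non-adjacent, shortest `x`–`y` paths through `A` and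
through `B` would be chordless and glue to a chordless cycle of length at least `4`. So `S` is a
clique, and `V₁ = A ∪ S`, `V₂ = Aᶜ` is the required decomposition.
-/
namespace SimpleGraph

variable {V W : Type*} {G : SimpleGraph V} {u v : V}

namespace Walk

theorem IsChordless.map {G' : SimpleGraph W} {p : G.Walk u v} (hp : p.IsChordless)
    (f : G ↪g G') : (p.map f.toHom).IsChordless := by
  rw [isChordless_iff_forall_mem_edges] at hp ⊢
  intro a b ha hb hab
  simp only [support_map, List.mem_map] at ha hb
  obtain ⟨a, ha, rfl⟩ := ha
  obtain ⟨b, hb, rfl⟩ := hb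
  rw [edges_map]
  exact List.mem_map_of_mem (f := Sym2.map f.toHom) (hp ha hb (f.map_adj_iff.mp hab))

theorem isChordless_of_length_eq_dist {p : G.Walk u v} (hp : p.length = G.dist u v) :
    p.IsChordless := by
  rw [isChordless_iff_forall_mem_edges]
  intro a b ha hb hab
  obtain ⟨i, rfl, hi⟩ := mem_support_iff_exists_getVert.mp ha
  obtain ⟨j, rfl, hj⟩ := mem_support_iff_exists_getVert.mp hb
  clear ha hb
  wlog hij : i ≤ j generalizing i j
  · rw [Sym2.eq_swap]
    exact this j hj i hi hab.symm (by omega)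
  obtain rfl | rfl | hij : j = i ∨ j = i + 1 ∨ i + 2 ≤ j := by omega
  · exact absurd hab (G.irrefl)
  · exact p.mk_mem_edges_iff_exists.mpr ⟨i, by omega, rfl⟩
  · -- jumping along the chord shortens `p`
    have hshort := G.dist_le ((p.take i).append (cons hab (p.drop j)))
    simp only [length_append, length_cons, take_length, drop_length] at hshort
    omega

theorem exists_isPath_isChordless_of_support_subset {T : Set V} (p : G.Walk u v)
    (hp : ∀ w ∈ p.support, w ∈ T) :
    ∃ q : G.Walk u v, q.IsPath ∧ q.IsChordless ∧ ∀ w ∈ q.support, w ∈ T := by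
  obtain ⟨r, hr⟩ := (p.induce T hp).reachable.exists_walk_length_eq_dist
  refine ⟨r.map (Embedding.induce T).toHom, (r.isPath_of_length_eq_dist hr).map
    Subtype.val_injective, (isChordless_of_length_eq_dist hr).map _, ?_⟩
  intro w hw
  obtain ⟨w, -, rfl⟩ := List.mem_map.mp (support_map _ r ▸ hw)
  exact w.2

theorem IsCycle.cycleGraph_isIndContained {p : G.Walk u u} (hc : p.IsCycle)
    (hp : p.IsChordless) : cycleGraph p.length ⊴ G := by
  obtain ⟨n, hn⟩ : ∃ n, p.length = n + 3 := ⟨p.length - 3, by have := hc.three_le_length; omega⟩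
  rw [hn]
  let f : Fin (n + 3) → V := fun i => p.getVert i
  have hf : Function.Injective f := fun i j h =>
    Fin.ext (hc.getVert_injOn' (by simp; omega) (by simp; omega) h)
  have hsucc (k : Fin (n + 3)) : p.getVert (k + 1) = f (k + 1) := by
    -- at the last index `k + 1` wraps around to `0`, and both sides are the base point `u`
    change _ = p.getVert (k + 1 : Fin (n + 3))
    rw [Fin.val_add_one]
    split_ifs with h
    · simp [h, ← hn]
    · rfl
  have hedge (i j : Fin (n + 3)) : s(f i, f j) ∈ p.edges ↔ i = j + 1 ∨ j = i + 1 := by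
    rw [mk_mem_edges_iff_exists]
    constructor
    · rintro ⟨k, hk, he⟩
      have hk' : k < n + 3 := hn ▸ hk
      rw [show p.getVert k = f ⟨k, hk'⟩ from rfl, hsucc ⟨k, hk'⟩, ← Sym2.map_mk, ← Sym2.map_mk,
        (Sym2.map.injective hf).eq_iff, Sym2.eq_iff] at he
      rcases he with ⟨rfl, rfl⟩ | ⟨rfl, rfl⟩
      · exact Or.inr rfl
      · exact Or.inl rfl
    · rintro (rfl | rfl)
      · exact ⟨j, by omega, by rw [hsucc j, Sym2.eq_swap]⟩
      · exact ⟨i, by omega, by rw [hsucc i]⟩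
  refine ⟨⟨⟨f, hf⟩, fun {i j} => ?_⟩⟩
  rw [cycleGraph_adj, sub_eq_iff_eq_add', sub_eq_iff_eq_add', ← hedge]
  exact ⟨hp.mem_edges (p.getVert_mem_support i) (p.getVert_mem_support j), p.adj_of_mem_edges⟩

theorem IsPath.start_notMem_support_tail {p : G.Walk u v} (hp : p.IsPath) :
    u ∉ p.support.tail :=
  (List.nodup_cons.mp (p.cons_tail_support ▸ hp.support_nodup)).1

theorem two_le_length_of_not_adj (p : G.Walk u v) (hne : u ≠ v) (hadj : ¬G.Adj u v) :
    2 ≤ p.length := by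
  by_contra! h
  interval_cases hl : p.length
  · exact hne (eq_of_length_eq_zero hl)
  · exact hadj (adj_of_length_eq_one hl)

theorem IsChordless.append {A B : Set V} {x y : V} {p : G.Walk x y} {q : G.Walk y x}
    (hp : p.IsChordless) (hq : q.IsChordless) (hAB : ∀ a ∈ A, ∀ b ∈ B, ¬G.Adj a b)
    (hpA : ∀ w ∈ p.support, w ∈ insert x (insert y A))
    (hqB : ∀ w ∈ q.support, w ∈ insert x (insert y B)) : (p.append q).IsChordless := by
  rw [isChordless_iff_forall_mem_edges] at hp hq ⊢
  have hpq : ∀ w ∈ p.support, w ∈ A ∨ w ∈ q.support := by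
    intro w hw
    rcases hpA w hw with rfl | rfl | hwA
    exacts [.inr q.end_mem_support, .inr q.start_mem_support, .inl hwA]
  have hqp : ∀ w ∈ q.support, w ∈ B ∨ w ∈ p.support := by
    intro w hw
    rcases hqB w hw with rfl | rfl | hwB
    exacts [.inr p.start_mem_support, .inr p.end_mem_support, .inl hwB]
  intro a b ha hb hab
  rw [edges_append, List.mem_append]
  rw [mem_support_append_iff] at ha hb
  rcases ha with ha | ha <;> rcases hb with hb | hb
  · exact .inl (hp ha hb hab)
  · rcases hpq a ha with haA | haq
    · rcases hqp b hb with hbB | hbp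
      · exact absurd hab (hAB a haA b hbB)
      · exact .inl (hp ha hbp hab)
    · exact .inr (hq haq hb hab)
  · rcases hpq b hb with hbA | hbq
    · rcases hqp a ha with haB | hap
      · exact absurd hab.symm (hAB b hbA a haB)
      · exact .inl (hp hap hb hab)
    · exact .inr (hq ha hbq hab)
  · exact .inr (hq ha hb hab)

end Walk

open Walk

theorem exists_isPath_isChordless_of_preconnected {A : Set V} (hA : (G.induce A).Preconnected)
    {x y : V} (hx : ∃ a ∈ A, G.Adj x a) (hy : ∃ b ∈ A, G.Adj y b) :
    ∃ p : G.Walk x y, p.IsPath ∧ p.IsChordless ∧ ∀ w ∈ p.support, w ∈ insert x (insert y A) := by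
  obtain ⟨a, ha, hxa⟩ := hx
  obtain ⟨b, hb, hyb⟩ := hy
  obtain ⟨r⟩ := hA ⟨a, ha⟩ ⟨b, hb⟩
  let r' : G.Walk a b := r.map (Embedding.induce A).toHom
  have hr' : ∀ w ∈ r'.support, w ∈ A := fun w hw => by
    obtain ⟨w, -, rfl⟩ := List.mem_map.mp (Walk.support_map _ r ▸ hw)
    exact w.2
  refine (cons hxa (r'.concat hyb.symm)).exists_isPath_isChordless_of_support_subset
    fun w hw => ?_
  rw [support_cons, support_concat, List.mem_cons, List.mem_append,
    List.mem_singleton] at hw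
  rcases hw with rfl | hw | rfl
  exacts [.inl rfl, .inr (.inr (hr' w hw)), .inr (.inl rfl)]

def IsChordal (G : SimpleGraph V) : Prop :=
  ∀ n, 4 ≤ n → IsEmpty (cycleGraph n ↪g G)

theorem IsChordal.length_lt_four {u : V} (hG : G.IsChordal) {p : G.Walk u u} (hc : p.IsCycle)
    (hp : p.IsChordless) : p.length < 4 := by
  by_contra! h
  obtain ⟨f⟩ := hc.cycleGraph_isIndContained hp
  exact (hG _ h).false f

theorem IsChordal.adj_of_isChordless {A B : Set V} (hG : G.IsChordal) (hAB : Disjoint A B)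
    (hnadj : ∀ a ∈ A, ∀ b ∈ B, ¬G.Adj a b) {x y : V} (hne : x ≠ y)
    {p : G.Walk x y} (hp : p.IsPath) (hpc : p.IsChordless)
    (hpA : ∀ w ∈ p.support, w ∈ insert x (insert y A))
    {q : G.Walk y x} (hq : q.IsPath) (hqc : q.IsChordless)
    (hqB : ∀ w ∈ q.support, w ∈ insert x (insert y B)) : G.Adj x y := by
  by_contra hadj
  have hp2 := p.two_le_length_of_not_adj hne hadj
  have hq2 := q.two_le_length_of_not_adj hne.symm (hadj ∘ G.adj_symm)
  have hdisj : p.support.tail.Disjoint q.support.tail := by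
    intro w hwp hwq
    have hwx : w ≠ x := fun h => hp.start_notMem_support_tail (h ▸ hwp)
    have hwy : w ≠ y := fun h => hq.start_notMem_support_tail (h ▸ hwq)
    have hwA := hpA w (List.mem_of_mem_tail hwp)
    have hwB := hqB w (List.mem_of_mem_tail hwq)
    simp only [Set.mem_insert_iff, hwx, hwy, false_or] at hwA hwB
    exact hAB.ne_of_mem hwA hwB rfl
  have hlt := hG.length_lt_four (hp.isCycle_append hq hdisj (.inl hp2))
    (hpc.append hqc hnadj hpA hqB)
  rw [length_append] at hlt
  omega

theorem IsChordal.isClique_of_forall_exists_adj (hG : G.IsChordal) {A B S : Set V}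
    (hA : (G.induce A).Preconnected) (hB : (G.induce B).Preconnected) (hAB : Disjoint A B)
    (hnadj : ∀ a ∈ A, ∀ b ∈ B, ¬G.Adj a b)
    (hS : ∀ s ∈ S, (∃ a ∈ A, G.Adj s a) ∧ ∃ b ∈ B, G.Adj s b) : G.IsClique S := by
  intro x hx y hy hne
  obtain ⟨p, hp, hpc, hpA⟩ := exists_isPath_isChordless_of_preconnected hA (hS x hx).1 (hS y hy).1
  obtain ⟨q, hq, hqc, hqB⟩ := exists_isPath_isChordless_of_preconnected hB (hS y hy).2 (hS x hx).2
  exact hG.adj_of_isChordless hAB hnadj hne hp hpc hpA hq hqc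
    (fun w hw => Set.insert_comm y x B ▸ hqB w hw)

section Separation

variable {S : Set V} {a b : V}

def Separates (G : SimpleGraph V) (S : Set V) (a b : V) : Prop :=
  a ∉ S ∧ b ∉ S ∧ ∀ p : G.Walk a b, ∃ w ∈ p.support, w ∈ S

def componentAvoiding (G : SimpleGraph V) (S : Set V) (a : V) : Set V :=
  {v | ∃ p : G.Walk a v, ∀ w ∈ p.support, w ∉ S}

theorem mem_componentAvoiding_self (ha : a ∉ S) : a ∈ G.componentAvoiding S a :=
  ⟨nil, by simpa⟩

theorem notMem_of_mem_componentAvoiding (hv : v ∈ G.componentAvoiding S a) : v ∉ S :=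
  let ⟨p, hp⟩ := hv
  hp v p.end_mem_support

theorem mem_componentAvoiding_of_adj (hu : u ∈ G.componentAvoiding S a) (hv : v ∉ S)
    (huv : G.Adj u v) : v ∈ G.componentAvoiding S a := by
  obtain ⟨p, hp⟩ := hu
  refine ⟨p.concat huv, fun w hw => ?_⟩
  rw [support_concat, List.mem_append, List.mem_singleton] at hw
  rcases hw with hw | rfl
  exacts [hp w hw, hv]

theorem mem_componentAvoiding_of_mem_support {p : G.Walk a v} (hp : ∀ w ∈ p.support, w ∉ S)
    {w : V} (hw : w ∈ p.support) : w ∈ G.componentAvoiding S a := by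
  classical
  exact ⟨p.takeUntil w hw, fun z hz => hp z (p.support_takeUntil_subset_support hw hz)⟩

theorem preconnected_induce_componentAvoiding :
    (G.induce (G.componentAvoiding S a)).Preconnected := by
  intro ⟨u, hu⟩ ⟨v, hv⟩
  have ⟨p, hp⟩ := hu
  have ⟨q, hq⟩ := hv
  have hpq : ∀ w ∈ (p.reverse.append q).support, w ∈ G.componentAvoiding S a := fun w hw => by
    rw [mem_support_append_iff, support_reverse, List.mem_reverse] at hw
    exact hw.elim (mem_componentAvoiding_of_mem_support hp)
      (mem_componentAvoiding_of_mem_support hq)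
  exact ((p.reverse.append q).induce _ hpq).reachable

theorem Separates.symm (h : G.Separates S a b) : G.Separates S b a :=
  ⟨h.2.1, h.1, fun p => by simpa using h.2.2 p.reverse⟩

theorem separates_compl_pair (hne : a ≠ b) (hadj : ¬G.Adj a b) : G.Separates {a, b}ᶜ a b := by
  refine ⟨by simp, by simp, fun p => ⟨p.snd, p.getVert_mem_support 1, ?_⟩⟩
  have hsnd := p.adj_snd (not_nil_of_ne hne)
  simp only [Set.mem_compl_iff, Set.mem_insert_iff, Set.mem_singleton_iff, not_or]
  exact ⟨hsnd.ne.symm, fun h => hadj (h ▸ hsnd)⟩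

theorem separates_of_forall_adj_mem {A : Set V} (ha : a ∉ S) (hb : b ∉ S) (haA : a ∈ A)
    (hbA : b ∉ A) (hA : ∀ u ∈ A, ∀ v, G.Adj u v → v ∉ S → v ∈ A) : G.Separates S a b := by
  suffices ∀ {c} (p : G.Walk c b), c ∈ A → ∃ w ∈ p.support, w ∈ S from
    ⟨ha, hb, fun p => this p haA⟩
  intro c p hc
  induction p with
  | nil => exact absurd hc hbA
  | @cons c d _ hcd p ih =>
    by_cases hd : d ∈ S
    · exact ⟨d, List.mem_cons_of_mem _ p.start_mem_support, hd⟩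
    · obtain ⟨w, hw, hwS⟩ := ih hb hbA (hA c hc d hcd hd)
      exact ⟨w, List.mem_cons_of_mem _ hw, hwS⟩

theorem Separates.notMem_componentAvoiding (h : G.Separates S a b) :
    b ∉ G.componentAvoiding S a := fun ⟨p, hp⟩ =>
  let ⟨w, hw, hwS⟩ := h.2.2 p
  hp w hw hwS

theorem Separates.disjoint_componentAvoiding (h : G.Separates S a b) :
    Disjoint (G.componentAvoiding S a) (G.componentAvoiding S b) := by
  rw [Set.disjoint_left]
  rintro v ⟨p, hp⟩ ⟨q, hq⟩
  obtain ⟨w, hw, hwS⟩ := h.2.2 (p.append q.reverse)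
  rw [mem_support_append_iff, support_reverse, List.mem_reverse] at hw
  exact hw.elim (hp w · hwS) (hq w · hwS)

theorem Separates.not_adj_of_mem_componentAvoiding (h : G.Separates S a b)
    (hu : u ∈ G.componentAvoiding S a) (hv : v ∈ G.componentAvoiding S b) : ¬G.Adj u v :=
  fun huv => h.disjoint_componentAvoiding.ne_of_mem
    (mem_componentAvoiding_of_adj hu (notMem_of_mem_componentAvoiding hv) huv) hv rfl

theorem exists_adj_mem_componentAvoiding_of_minimal {s : V}
    (h : Minimal (G.Separates · a b) S) (hs : s ∈ S) :
    ∃ u ∈ G.componentAvoiding S a, G.Adj s u := by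
  by_contra! hno
  -- otherwise the component of `a` is still closed in `G - (S \ {s})`
  have hsep : G.Separates (S \ {s}) a b :=
    separates_of_forall_adj_mem (fun ha => h.prop.1 ha.1) (fun hb => h.prop.2.1 hb.1)
      (mem_componentAvoiding_self h.prop.1) h.prop.notMem_componentAvoiding
      fun u hu v huv hv => by
        by_cases hvs : v = s
        · exact absurd huv.symm (hvs ▸ hno u hu)
        · exact mem_componentAvoiding_of_adj hu (fun hvS => hv ⟨hvS, hvs⟩) huv
  exact (h.le_of_le hsep Set.sdiff_subset hs).2 rfl

end Separation

end SimpleGraph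

open SimpleGraph

/-- Dirac's clique separator theorem.  Let `Γ` be a finite chordal graph (no induced
cycle of length at least `4`) that is not complete.  Then `V(Γ) = V1 ∪ V2` where `V1`
and `V2` are proper subsets, the induced subgraph on `V1 ∩ V2` is complete, and no
vertex of `V1 \ V2` is adjacent to a vertex of `V2 \ V1`. -/
theorem chordal_clique_separator
    {V : Type*} [Finite V] (Γ : SimpleGraph V)
    (hchordal : ∀ n : ℕ, 4 ≤ n → IsEmpty (SimpleGraph.cycleGraph n ↪g Γ))
    (hnotcomplete : Γ ≠ ⊤) :
    ∃ V1 V2 : Set V, V1 ∪ V2 = Set.univ ∧ V1 ≠ Set.univ ∧ V2 ≠ Set.univ ∧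
      Γ.IsClique (V1 ∩ V2) ∧
      ∀ a ∈ V1 \ V2, ∀ b ∈ V2 \ V1, ¬ Γ.Adj a b := by
  obtain ⟨a, b, hne, hadj⟩ := Γ.ne_top_iff_exists_not_adj.mp hnotcomplete
  obtain ⟨S, hS⟩ := exists_minimal_of_wellFoundedLT (Γ.Separates · a b)
    ⟨_, separates_compl_pair hne hadj⟩
  have hS' : Minimal (Γ.Separates · b a) S := ⟨hS.prop.symm, fun T hT => hS.2 hT.symm⟩
  have hclique : Γ.IsClique S :=
    IsChordal.isClique_of_forall_exists_adj hchordal preconnected_induce_componentAvoiding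
      preconnected_induce_componentAvoiding hS.prop.disjoint_componentAvoiding
      (fun _ hu _ hv => hS.prop.not_adj_of_mem_componentAvoiding hu hv)
      fun s hs => ⟨exists_adj_mem_componentAvoiding_of_minimal hS hs,
        exists_adj_mem_componentAvoiding_of_minimal hS' hs⟩
  set A := Γ.componentAvoiding S a
  refine ⟨A ∪ S, Aᶜ, ?_, ?_, ?_, ?_, ?_⟩
  · rw [Set.union_right_comm, Set.union_compl_self, Set.univ_union]
  · exact (Set.ne_univ_iff_exists_notMem _).mpr
      ⟨b, fun hb => hb.elim hS.prop.notMem_componentAvoiding hS.prop.2.1⟩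
  · exact (Set.ne_univ_iff_exists_notMem _).mpr
      ⟨a, not_not.mpr (mem_componentAvoiding_self hS.prop.1)⟩
  · exact hclique.subset fun v ⟨hv, hvA⟩ => hv.resolve_left hvA
  · rintro u ⟨-, hu⟩ v ⟨hvA, hv⟩ huv
    exact hvA (mem_componentAvoiding_of_adj (not_not.mp hu) (fun hvS => hv (.inr hvS)) huv)
end

section
/- Let Γ be a finite simple graph, t a vertex of Γ, and Γ'' the double of Γ ∖ st(t) along the link of t (two copies of Γ ∖ st(t) glued along the induced subgraph on lk(t)). If 𝒢 = {G_v : v ∈ V(Γ)} is a collection of nontrivial groups and ρ: V(Γ'') → V(Γ) ∖ {t} is the natural projection, then GP(Γ'', {G_{ρ(u)}}) embeds into GP(Γ, 𝒢). -/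
open Monoid
open scoped commutatorElement

variable {V : Type*} (Γ : SimpleGraph V) (G : V → Type*) [∀ v, Group (G v)]

/-- The defining relators of the graph product: commutators of elements of
vertex groups attached to adjacent vertices. -/
def graphProductRels : Set (Monoid.CoprodI G) :=
  {x | ∃ (u v : V) (g : G u) (h : G v), Γ.Adj u v ∧
        x = ⁅Monoid.CoprodI.of g, Monoid.CoprodI.of h⁆}

/-- The graph product of the groups `G v` over the graph `Γ`. -/
def GraphProduct : Type _ :=
  Monoid.CoprodI G ⧸ Subgroup.normalClosure (graphProductRels Γ G)

instance : Group (GraphProduct Γ G) :=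
  QuotientGroup.Quotient.group _

/-- The canonical map from a vertex group into the graph product. -/
def GraphProduct.of (v : V) : G v →* GraphProduct Γ G :=
  (QuotientGroup.mk' _).comp Monoid.CoprodI.of

/-- The natural projection from the graph product onto the direct product of the
vertex groups. -/
def GraphProduct.proj [DecidableEq V] : GraphProduct Γ G →* ((v : V) → G v) :=
  QuotientGroup.lift _ (Monoid.CoprodI.lift fun v => MonoidHom.mulSingle G v)
    (Subgroup.normalClosure_le_normal <| by
      rintro x ⟨u, v, g, h, hadj, rfl⟩
      have huv : u ≠ v := hadj.ne
      simp only [SetLike.mem_coe, MonoidHom.mem_ker, map_commutatorElement,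
        Monoid.CoprodI.lift_of]
      exact commutatorElement_eq_one_iff_commute.mpr
        (Pi.mulSingle_commute huv g h))

/-- The graph product kernel: the kernel of the natural surjection onto the
direct product of the vertex groups. -/
def GraphProductKernel [DecidableEq V] : Subgroup (GraphProduct Γ G) :=
  MonoidHom.ker (GraphProduct.proj Γ G)

/-- The double of `Γ ∖ st(t₀)` along the link of `t₀`: two copies of the induced
subgraph on `V ∖ {t₀}` glued along the induced subgraph on the link of `t₀`.
Vertices of the link are represented by pairs with second coordinate `false`. -/
def doubleAlongLink {V : Type*} (Γ : SimpleGraph V) (t₀ : V) :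
    SimpleGraph {p : V × Bool // p.1 ≠ t₀ ∧ (p.2 = false ∨ ¬ Γ.Adj t₀ p.1)} where
  Adj p q := Γ.Adj p.1.1 q.1.1 ∧ (p.1.2 = q.1.2 ∨ Γ.Adj t₀ p.1.1 ∨ Γ.Adj t₀ q.1.1)
  symm := by
    constructor
    rintro p q ⟨h1, h2⟩
    exact ⟨h1.symm, by tauto⟩
  loopless := by
    constructor
    rintro p ⟨h, -⟩
    exact Γ.loopless.irrefl _ h

/-!
Fix `a ≠ 1` in `G t₀`. Mapping the first copy of `Γ ∖ st(t₀)` identically and the second one by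
conjugation by `a` respects the relations of the double: an edge joining the two copies has an
endpoint in the link of `t₀`, whose vertex group commutes with `a`.

For injectivity, let `M` glue `|G t₀|` copies of `Γ ∖ st(t₀)` along the link of `t₀`. Then
`G t₀` acts on `GP(M)` by permuting the copies, and `GP(Γ) → GP(M) ⋊ G t₀` sends `G t₀` to the
complement and every other vertex group to the copy indexed by `1`. Composed with it, the map
above becomes the map induced by the embedding of the double into `M` as the copies `1` and `a`.
That embedding is an induced subgraph, and graph products over induced subgraphs are retracts.
-/

namespace GraphProduct

section Lift

variable {H : Type*} [Group H]

def lift (f : ∀ v, G v →* H)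
    (hf : ∀ ⦃u v : V⦄, Γ.Adj u v → ∀ (g : G u) (h : G v), Commute (f u g) (f v h)) :
    GraphProduct Γ G →* H :=
  QuotientGroup.lift _ (CoprodI.lift f) <| Subgroup.normalClosure_le_normal <| by
    rintro x ⟨u, v, g, h, hadj, rfl⟩
    simpa [map_commutatorElement] using (hf hadj g h).commutator_eq

@[ext]
lemma hom_ext {f f' : GraphProduct Γ G →* H}
    (h : ∀ (v : V) (g : G v), f (of Γ G v g) = f' (of Γ G v g)) : f = f' :=
  QuotientGroup.monoidHom_ext _ <| CoprodI.ext_hom _ _ fun v => MonoidHom.ext (h v)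

end Lift

lemma of_commute {u v : V} (h : Γ.Adj u v) (g : G u) (g' : G v) :
    Commute (of Γ G u g) (of Γ G v g') :=
  commutatorElement_eq_one_iff_commute.mp <| (QuotientGroup.eq_one_iff _).mpr <|
    Subgroup.subset_normalClosure ⟨u, v, g, g', h, rfl⟩

lemma conj_of_of_adj {u v : V} (h : Γ.Adj u v) (a : G u) (g : G v) :
    MulAut.conj (of Γ G u a) (of Γ G v g) = of Γ G v g :=
  (of_commute Γ G h a g).mul_inv_cancel

lemma of_congr {u v : V} (h : u = v) {g : G u} {g' : G v} (hg : HEq g g') :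
    of Γ G u g = of Γ G v g' := by
  subst h
  rw [eq_of_heq hg]

section Map

variable {W : Type*} {Δ : SimpleGraph W}

def map (φ : Δ →g Γ) : GraphProduct Δ (fun w => G (φ w)) →* GraphProduct Γ G :=
  lift Δ _ (fun w => of Γ G (φ w)) fun _ _ h => of_commute Γ G (φ.map_adj h)

open Classical in
noncomputable def retractOf (φ : Δ ↪g Γ) (v : V) : G v →* GraphProduct Δ (fun w => G (φ w)) :=
  if h : ∃ w, φ w = v then h.choose_spec ▸ of Δ (fun w => G (φ w)) h.choose else 1

lemma retractOf_apply (φ : Δ ↪g Γ) (w : W) :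
    retractOf Γ G φ (φ w) = of Δ (fun w => G (φ w)) w := by
  have transport : ∀ w' (e : φ w' = φ w),
      (e ▸ of Δ (fun w => G (φ w)) w' : G (φ w) →* _) = of Δ (fun w => G (φ w)) w := by
    rintro w' e
    obtain rfl := φ.injective e
    rfl
  have h : ∃ w', φ w' = φ w := ⟨w, rfl⟩
  rw [retractOf, dif_pos h]
  exact transport _ h.choose_spec

noncomputable def retract (φ : Δ ↪g Γ) :
    GraphProduct Γ G →* GraphProduct Δ (fun w => G (φ w)) :=
  lift Γ G (retractOf Γ G φ) <| by
    intro u v huv g g'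
    by_cases hu : ∃ w, φ w = u
    swap
    · simp [retractOf, hu]
    by_cases hv : ∃ w, φ w = v
    swap
    · simp [retractOf, hv]
    obtain ⟨⟨w, rfl⟩, ⟨w', rfl⟩⟩ := And.intro hu hv
    rw [retractOf_apply, retractOf_apply]
    exact of_commute Δ (fun w => G (φ w)) (φ.map_adj_iff.mp huv) g g'

lemma retract_comp_map (φ : Δ ↪g Γ) :
    (retract Γ G φ).comp (map Γ G φ.toHom) = MonoidHom.id _ := by
  ext w g
  exact DFunLike.congr_fun (retractOf_apply Γ G φ w) g

lemma map_injective (φ : Δ ↪g Γ) : Function.Injective (map Γ G φ.toHom) :=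
  Function.LeftInverse.injective (DFunLike.congr_fun (retract_comp_map Γ G φ))

end Map

end GraphProduct

section LinkMultiple

variable (t₀ : V) {ι κ μ : Type*}

abbrev LinkMultipleVert (i₀ : ι) : Type _ :=
  {p : V × ι // p.1 ≠ t₀ ∧ (p.2 = i₀ ∨ ¬ Γ.Adj t₀ p.1)}

/-- Copies of `Γ ∖ st(t₀)` indexed by `ι`, glued along the link of `t₀`, whose vertices are kept
only in the copy `i₀`. `doubleAlongLink Γ t₀` is `linkMultiple Γ t₀ false`. -/
def linkMultiple (i₀ : ι) : SimpleGraph (LinkMultipleVert Γ t₀ i₀) where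
  Adj p q := Γ.Adj p.1.1 q.1.1 ∧ (p.1.2 = q.1.2 ∨ Γ.Adj t₀ p.1.1 ∨ Γ.Adj t₀ q.1.1)
  symm := ⟨fun _ _ h => ⟨h.1.symm, by tauto⟩⟩
  loopless := ⟨fun _ h => Γ.loopless.irrefl _ h.1⟩

variable {Γ t₀}

lemma LinkMultipleVert.snd_eq_of_adj {i₀ : ι} (p : LinkMultipleVert Γ t₀ i₀)
    (h : Γ.Adj t₀ p.1.1) : p.1.2 = i₀ :=
  p.2.2.resolve_right (not_not_intro h)

namespace linkMultiple

open Classical in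
noncomputable def reindex {i₀ : ι} {j₀ : κ} (f : ι ↪ κ) :
    linkMultiple Γ t₀ i₀ ↪g linkMultiple Γ t₀ j₀ where
  toFun p := ⟨(p.1.1, if Γ.Adj t₀ p.1.1 then j₀ else f p.1.2), p.2.1, by
    by_cases h : Γ.Adj t₀ p.1.1 <;> simp [h]⟩
  inj' p q hpq := by
    simp only [Subtype.mk.injEq, Prod.mk.injEq] at hpq
    obtain ⟨h1, h2⟩ := hpq
    refine Subtype.ext (Prod.ext h1 ?_)
    by_cases hp : Γ.Adj t₀ p.1.1
    · rw [p.snd_eq_of_adj hp, q.snd_eq_of_adj (h1 ▸ hp)]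
    · rw [if_neg hp, if_neg (h1 ▸ hp)] at h2
      exact f.injective h2
  map_rel_iff' {p q} := by
    by_cases hp : Γ.Adj t₀ p.1.1 <;> by_cases hq : Γ.Adj t₀ q.1.1 <;>
      simp [linkMultiple, hp, hq]

open Classical in
@[simp]
lemma coe_reindex_apply {i₀ : ι} {j₀ : κ} (f : ι ↪ κ) (p : LinkMultipleVert Γ t₀ i₀) :
    (reindex (j₀ := j₀) f p : V × κ) = (p.1.1, if Γ.Adj t₀ p.1.1 then j₀ else f p.1.2) :=
  rfl

lemma reindex_reindex {i₀ : ι} {j₀ : κ} {k₀ : μ} {f : ι ↪ κ} {g : κ ↪ μ} {h : ι ↪ μ}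
    (hfg : ∀ i, g (f i) = h i) (p : LinkMultipleVert Γ t₀ i₀) :
    reindex (j₀ := k₀) g (reindex (j₀ := j₀) f p) = reindex h p := by
  refine Subtype.ext (Prod.ext rfl ?_)
  by_cases hp : Γ.Adj t₀ p.1.1 <;> simp [hp, hfg]

lemma reindex_eq_self {i₀ : ι} {f : ι ↪ ι} (hf : ∀ i, f i = i) (p : LinkMultipleVert Γ t₀ i₀) :
    reindex (j₀ := i₀) f p = p := by
  refine Subtype.ext (Prod.ext rfl ?_)
  by_cases hp : Γ.Adj t₀ p.1.1
  · simp [hp, p.snd_eq_of_adj hp]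
  · simp [hp, hf]

lemma reindex_of_adj {i₀ : ι} (f : ι ↪ ι) (p : LinkMultipleVert Γ t₀ i₀)
    (hp : Γ.Adj t₀ p.1.1) : reindex (j₀ := i₀) f p = p :=
  Subtype.ext (Prod.ext rfl (by simp [hp, p.snd_eq_of_adj hp]))

variable (Γ t₀) {K : Type*} [Group K] [MulAction K ι] (i₀ : ι)

noncomputable def shiftHom (k : K) :
    GraphProduct (linkMultiple Γ t₀ i₀) (fun p => G p.1.1) →*
      GraphProduct (linkMultiple Γ t₀ i₀) (fun p => G p.1.1) :=
  GraphProduct.map (linkMultiple Γ t₀ i₀) (fun p => G p.1.1)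
    (reindex (MulAction.toPerm k).toEmbedding).toHom

lemma shiftHom_mul (k k' : K) :
    shiftHom Γ G t₀ i₀ (k * k') = (shiftHom Γ G t₀ i₀ k).comp (shiftHom Γ G t₀ i₀ k') := by
  ext p g
  exact GraphProduct.of_congr _ _
    (reindex_reindex (fun i => (mul_smul k k' i).symm) p).symm HEq.rfl

lemma shiftHom_one : shiftHom Γ G t₀ i₀ (1 : K) = MonoidHom.id _ := by
  ext p g
  exact GraphProduct.of_congr _ _ (reindex_eq_self (one_smul K) p) HEq.rfl

noncomputable def shift :
    K →* MulAut (GraphProduct (linkMultiple Γ t₀ i₀) fun p => G p.1.1) where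
  toFun k := (shiftHom Γ G t₀ i₀ k).toMulEquiv (shiftHom Γ G t₀ i₀ k⁻¹)
    (by rw [← shiftHom_mul, inv_mul_cancel, shiftHom_one])
    (by rw [← shiftHom_mul, mul_inv_cancel, shiftHom_one])
  map_one' := MulEquiv.ext fun x => DFunLike.congr_fun (shiftHom_one Γ G t₀ i₀) x
  map_mul' k k' := MulEquiv.ext fun x => DFunLike.congr_fun (shiftHom_mul Γ G t₀ i₀ k k') x

variable {Γ t₀ i₀}

lemma shift_of (k : K) (p : LinkMultipleVert Γ t₀ i₀) (g : G p.1.1) :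
    shift Γ G t₀ i₀ k (GraphProduct.of (linkMultiple Γ t₀ i₀) (fun p => G p.1.1) p g) =
      GraphProduct.of (linkMultiple Γ t₀ i₀) (fun p => G p.1.1)
        (reindex (MulAction.toPerm k).toEmbedding p) g :=
  rfl

lemma shift_of_of_adj (k : K) (p : LinkMultipleVert Γ t₀ i₀) (hp : Γ.Adj t₀ p.1.1)
    (g : G p.1.1) :
    shift Γ G t₀ i₀ k (GraphProduct.of (linkMultiple Γ t₀ i₀) (fun p => G p.1.1) p g) =
      GraphProduct.of (linkMultiple Γ t₀ i₀) (fun p => G p.1.1) p g :=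
  (shift_of G k p g).trans (GraphProduct.of_congr _ _ (reindex_of_adj _ p hp) HEq.rfl)

end linkMultiple

end LinkMultiple

section Semidirect

open SemidirectProduct GraphProduct linkMultiple

variable (t₀ : V)

open Classical in
noncomputable def toSemidirectOf (v : V) :
    G v →* GraphProduct (linkMultiple Γ t₀ (1 : G t₀)) (fun p => G p.1.1)
      ⋊[shift Γ G t₀ (1 : G t₀)] G t₀ :=
  if h : v = t₀ then h ▸ inr
  else inl.comp (of (linkMultiple Γ t₀ (1 : G t₀)) (fun p => G p.1.1) ⟨(v, 1), h, Or.inl rfl⟩)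

lemma toSemidirectOf_self : toSemidirectOf Γ G t₀ t₀ = inr := by
  simp [toSemidirectOf]

variable {Γ G t₀}

lemma toSemidirectOf_of_ne {v : V} (h : v ≠ t₀) :
    toSemidirectOf Γ G t₀ v =
      inl.comp (of (linkMultiple Γ t₀ (1 : G t₀)) (fun p => G p.1.1) ⟨(v, 1), h, Or.inl rfl⟩) :=
  dif_neg h

lemma commute_inr_toSemidirectOf {v : V} (h : Γ.Adj t₀ v) (k : G t₀) (g : G v) :
    Commute (inr k) (toSemidirectOf Γ G t₀ v g) := by
  rw [toSemidirectOf_of_ne h.ne']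
  have hconj := inl_aut (φ := shift Γ G t₀ (1 : G t₀)) k
    (of (linkMultiple Γ t₀ (1 : G t₀)) (fun p => G p.1.1) ⟨(v, 1), h.ne', Or.inl rfl⟩ g)
  rw [shift_of_of_adj G _ _ h, map_inv] at hconj
  exact (eq_mul_inv_iff_mul_eq.mp hconj).symm

variable (Γ G t₀)

noncomputable def toSemidirect :
    GraphProduct Γ G →* GraphProduct (linkMultiple Γ t₀ (1 : G t₀)) (fun p => G p.1.1)
      ⋊[shift Γ G t₀ (1 : G t₀)] G t₀ :=
  lift Γ G (toSemidirectOf Γ G t₀) <| by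
    intro u v huv g g'
    by_cases hu : u = t₀
    · subst hu
      rw [toSemidirectOf_self]
      exact commute_inr_toSemidirectOf huv g g'
    by_cases hv : v = t₀
    · subst hv
      rw [toSemidirectOf_self]
      exact (commute_inr_toSemidirectOf huv.symm g' g).symm
    rw [toSemidirectOf_of_ne hu, toSemidirectOf_of_ne hv]
    exact (of_commute (linkMultiple Γ t₀ (1 : G t₀)) (fun p => G p.1.1)
      (u := ⟨(u, 1), hu, Or.inl rfl⟩) (v := ⟨(v, 1), hv, Or.inl rfl⟩)
      ⟨huv, Or.inl rfl⟩ g g').map inl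

lemma toSemidirect_of (v : V) (g : G v) :
    toSemidirect Γ G t₀ (of Γ G v g) = toSemidirectOf Γ G t₀ v g :=
  rfl

noncomputable def ofDouble (a : G t₀) :
    GraphProduct (doubleAlongLink Γ t₀) (fun p => G p.1.1) →* GraphProduct Γ G :=
  lift _ _ (fun p => bif p.1.2 then (MulAut.conj (of Γ G t₀ a)).toMonoidHom.comp (of Γ G p.1.1)
    else of Γ G p.1.1) <| by
    rintro ⟨⟨u, _ | _⟩, hu⟩ ⟨⟨v, _ | _⟩, hv⟩ ⟨huv, hside⟩ g g'
    · exact of_commute Γ G huv g g'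
    · have hu' : Γ.Adj t₀ u := by simp at hside hv; tauto
      show Commute (of Γ G u g) (MulAut.conj (of Γ G t₀ a) (of Γ G v g'))
      rw [← conj_of_of_adj Γ G hu' a g]
      exact (of_commute Γ G huv g g').map (MulAut.conj _).toMonoidHom
    · have hv' : Γ.Adj t₀ v := by simp at hside hu; tauto
      show Commute (MulAut.conj (of Γ G t₀ a) (of Γ G u g)) (of Γ G v g')
      rw [← conj_of_of_adj Γ G hv' a g']
      exact (of_commute Γ G huv g g').map (MulAut.conj _).toMonoidHom
    · exact (of_commute Γ G huv g g').map (MulAut.conj _).toMonoidHom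

lemma toSemidirect_comp_ofDouble (f : Bool ↪ G t₀) (hf : f false = 1) :
    (toSemidirect Γ G t₀).comp (ofDouble Γ G t₀ (f true)) =
      inl.comp (GraphProduct.map (linkMultiple Γ t₀ (1 : G t₀)) (fun p => G p.1.1)
        (reindex (i₀ := false) f).toHom) := by
  refine hom_ext _ _ fun ⟨⟨v, b⟩, hv⟩ g => ?_
  cases b
  · show toSemidirect Γ G t₀ (of Γ G v g) =
      inl (of (linkMultiple Γ t₀ (1 : G t₀)) (fun p => G p.1.1) (reindex f ⟨(v, false), hv⟩) g)
    rw [toSemidirect_of, toSemidirectOf_of_ne hv.1]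
    have hp : (⟨(v, 1), hv.1, Or.inl rfl⟩ : LinkMultipleVert Γ t₀ (1 : G t₀)) =
        reindex f ⟨(v, false), hv⟩ :=
      Subtype.ext (Prod.ext rfl (by by_cases h : Γ.Adj t₀ v <;> simp [h, hf]))
    exact congrArg inl (of_congr _ _ hp HEq.rfl)
  · show toSemidirect Γ G t₀ (of Γ G t₀ (f true) * of Γ G v g * (of Γ G t₀ (f true))⁻¹) =
      inl (of (linkMultiple Γ t₀ (1 : G t₀)) (fun p => G p.1.1) (reindex f ⟨(v, true), hv⟩) g)
    rw [map_mul, map_mul, map_inv, toSemidirect_of, toSemidirect_of, toSemidirectOf_self,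
      toSemidirectOf_of_ne hv.1, MonoidHom.comp_apply, ← map_inv, ← inl_aut, shift_of]
    have hp : reindex (j₀ := (1 : G t₀)) (MulAction.toPerm (f true)).toEmbedding
        ⟨(v, 1), hv.1, Or.inl rfl⟩ = reindex (j₀ := (1 : G t₀)) f ⟨(v, true), hv⟩ :=
      Subtype.ext (Prod.ext rfl (by by_cases h : Γ.Adj t₀ v <;> simp [h]))
    exact congrArg inl (of_congr _ _ hp HEq.rfl)

end Semidirect

theorem double_embeds_in_graphProduct_general
    {V : Type*} (Γ : SimpleGraph V) (G : V → Type*) [∀ v, Group (G v)]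
    [∀ v, Nontrivial (G v)] (t₀ : V) :
    ∃ f : GraphProduct (doubleAlongLink Γ t₀) (fun p => G p.1.1) →* GraphProduct Γ G,
      Function.Injective f := by
  obtain ⟨a, ha⟩ := exists_ne (1 : G t₀)
  let e : Bool ↪ G t₀ := ⟨(cond · a 1), Bool.injective_iff.mpr ha.symm⟩
  have h : Function.Injective ((toSemidirect Γ G t₀).comp (ofDouble Γ G t₀ (e true))) := by
    rw [toSemidirect_comp_ofDouble Γ G t₀ e rfl]
    exact SemidirectProduct.inl_injective.comp (GraphProduct.map_injective _ _ _)
  exact ⟨ofDouble Γ G t₀ (e true), Function.Injective.of_comp (f := toSemidirect Γ G t₀) h⟩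

/-- Let `Γ` be a finite simple graph, `t₀` a vertex, and `Γ''` the double of
`Γ ∖ st(t₀)` along the link of `t₀`.  If all vertex groups `G v` are nontrivial and
the vertex groups of `Γ''` are pulled back along the natural projection
`ρ : V(Γ'') → V(Γ) ∖ {t₀}`, then `GP(Γ'', 𝒢 ∘ ρ)` embeds into `GP(Γ, 𝒢)`. -/
theorem double_embeds_in_graphProduct
    {V : Type*} [Finite V] (Γ : SimpleGraph V) (G : V → Type*) [∀ v, Group (G v)]
    [∀ v, Nontrivial (G v)] (t₀ : V) :
    ∃ f : GraphProduct (doubleAlongLink Γ t₀) (fun p => G p.1.1) →* GraphProduct Γ G,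
      Function.Injective f :=
  double_embeds_in_graphProduct_general Γ G t₀
end
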